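/- For all L, P_r, R_a > 0, all continuous square-integrable f, g, all T > 0 and all R > 0, there exists a constant C > 0 (depending only on L, P_r, R_a, ‖f‖_{L²}, ‖g‖_{L²}, T and R) such that every classical solution (Ψ, θ, ξ) of the Newton–Boussinesq system on the channel, as in the context, with ‖ξ(0)‖ ≤ R and ‖θ(0)‖ ≤ R satisfies ‖ξ(t)‖ + ‖θ(t)‖ ≤ C for all t ∈ [0,T]. (Lemma 2.1 of the paper, for classical solutions.) -/

import Mathlib

open MeasureTheory Real

noncomputable section

/-- Partial derivative in the first (`x`) direction. -/
def pdx (u : ℝ × ℝ → ℝ) : ℝ × ℝ → ℝ := fun p => fderiv ℝ u p (1, 0)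

/-- Partial derivative in the second (`y`) direction. -/
def pdy (u : ℝ × ℝ → ℝ) : ℝ × ℝ → ℝ := fun p => fderiv ℝ u p (0, 1)

/-- Squared length of the spatial gradient: `|∇u|² = (∂ₓu)² + (∂ᵧu)²`. -/
def gradSq (u : ℝ × ℝ → ℝ) : ℝ × ℝ → ℝ := fun p => (pdx u p) ^ 2 + (pdy u p) ^ 2

/-- The Laplacian `Δu = ∂ₓₓu + ∂ᵧᵧu`. -/
def lap (u : ℝ × ℝ → ℝ) : ℝ × ℝ → ℝ := fun p => pdx (pdx u) p + pdy (pdy u) p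

/-- The Jacobian (Poisson bracket) `J(u,v) = (∂ᵧu)(∂ₓv) − (∂ₓu)(∂ᵧv)`. -/
def jac (u v : ℝ × ℝ → ℝ) : ℝ × ℝ → ℝ := fun p => pdy u p * pdx v p - pdx u p * pdy v p

/-- `L²` norm over `ℝ²`. -/
def L2norm (u : ℝ × ℝ → ℝ) : ℝ := Real.sqrt (∫ p : ℝ × ℝ, (u p) ^ 2)

/-- `L²` norm of the gradient: `‖∇u‖_{L²}`. -/
def gradL2 (u : ℝ × ℝ → ℝ) : ℝ := Real.sqrt (∫ p : ℝ × ℝ, gradSq u p)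

/-- Sobolev norm `‖u‖_{H^m}`, the square root of the sum of the squared `L²` norms of all
partial derivatives `∂ₓ^i ∂ᵧ^j u` with `i + j ≤ m`. -/
def Hnorm (m : ℕ) (u : ℝ × ℝ → ℝ) : ℝ :=
  Real.sqrt (∑ i ∈ Finset.range (m + 1), ∑ j ∈ Finset.range (m + 1 - i),
    ∫ p : ℝ × ℝ, (pdx^[i] (pdy^[j] u) p) ^ 2)

/-- The two-dimensional channel `Ω = (0, L) × ℝ`. -/
def channel (L : ℝ) : Set (ℝ × ℝ) := Set.Ioo 0 L ×ˢ (Set.univ : Set ℝ)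

/-- A classical solution of the Newton–Boussinesq system on the channel `Ω = (0,L) × ℝ`:
a pair of jointly smooth functions `Ψ θ`, with spatial supports contained in a fixed
compact set `K ⊆ Ω` for all `t ≥ 0`, such that, with `ξ := ΔΨ` (spatial Laplacian),
`∂ₜξ − Δξ + J(Ψ,ξ) + (Ra/Pr) ∂ₓθ = f` and `∂ₜθ − (1/Pr) Δθ + J(Ψ,θ) = g`
hold at every point of `[0,∞) × Ω`. -/
structure NBSolution (L Pr Ra : ℝ) (f g : ℝ × ℝ → ℝ) where
  Psi : ℝ → ℝ × ℝ → ℝ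
  theta : ℝ → ℝ × ℝ → ℝ
  smooth_Psi : ContDiff ℝ (⊤ : ℕ∞) (fun q : ℝ × (ℝ × ℝ) => Psi q.1 q.2)
  smooth_theta : ContDiff ℝ (⊤ : ℕ∞) (fun q : ℝ × (ℝ × ℝ) => theta q.1 q.2)
  K : Set (ℝ × ℝ)
  K_compact : IsCompact K
  K_subset : K ⊆ channel L
  supp_Psi : ∀ t : ℝ, 0 ≤ t → tsupport (Psi t) ⊆ K
  supp_theta : ∀ t : ℝ, 0 ≤ t → tsupport (theta t) ⊆ K
  eq_xi : ∀ t : ℝ, 0 ≤ t → ∀ p ∈ channel L,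
    deriv (fun s => lap (Psi s) p) t - lap (lap (Psi t)) p
      + jac (Psi t) (lap (Psi t)) p + (Ra / Pr) * pdx (theta t) p = f p
  eq_theta : ∀ t : ℝ, 0 ≤ t → ∀ p ∈ channel L,
    deriv (fun s => theta s p) t - (1 / Pr) * lap (theta t) p + jac (Psi t) (theta t) p = g p

/-- The vortex `ξ := ΔΨ` of a solution. -/
def NBSolution.xi {L Pr Ra : ℝ} {f g : ℝ × ℝ → ℝ} (sol : NBSolution L Pr Ra f g) :
    ℝ → ℝ × ℝ → ℝ := fun t => lap (sol.Psi t)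

section Helpers

lemma contDiff_pd {u : ℝ × ℝ → ℝ} (hu : ContDiff ℝ (⊤ : ℕ∞) u) (v : ℝ × ℝ) :
    ContDiff ℝ (⊤ : ℕ∞) (fun p => fderiv ℝ u p v) :=
  (hu.fderiv_right (by simp)).clm_apply contDiff_const

lemma contDiff_pdx {u : ℝ × ℝ → ℝ} (hu : ContDiff ℝ (⊤ : ℕ∞) u) : ContDiff ℝ (⊤ : ℕ∞) (pdx u) :=
  contDiff_pd hu _
lemma contDiff_pdy {u : ℝ × ℝ → ℝ} (hu : ContDiff ℝ (⊤ : ℕ∞) u) : ContDiff ℝ (⊤ : ℕ∞) (pdy u) :=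
  contDiff_pd hu _
lemma contDiff_lap {u : ℝ × ℝ → ℝ} (hu : ContDiff ℝ (⊤ : ℕ∞) u) : ContDiff ℝ (⊤ : ℕ∞) (lap u) :=
  (contDiff_pdx (contDiff_pdx hu)).add (contDiff_pdy (contDiff_pdy hu))

lemma pd_eq_zero {u : ℝ × ℝ → ℝ} {p : ℝ × ℝ} (h : p ∉ tsupport u) (v : ℝ × ℝ) :
    fderiv ℝ u p v = 0 := by
  rw [(HasFDerivAt.of_notMem_tsupport ℝ h).fderiv]; rfl

lemma support_pd_subset (u : ℝ × ℝ → ℝ) (v : ℝ × ℝ) :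
    tsupport (fun p => fderiv ℝ u p v) ⊆ tsupport u := by
  apply closure_minimal _ (isClosed_tsupport u)
  intro p hp
  simp only [Function.mem_support, ne_eq] at hp
  by_contra h
  exact hp (pd_eq_zero h v)

lemma tsupport_pdx (u : ℝ × ℝ → ℝ) : tsupport (pdx u) ⊆ tsupport u := support_pd_subset u _
lemma tsupport_pdy (u : ℝ × ℝ → ℝ) : tsupport (pdy u) ⊆ tsupport u := support_pd_subset u _

lemma lap_eq_zero {u : ℝ × ℝ → ℝ} {p : ℝ × ℝ} (h : p ∉ tsupport u) : lap u p = 0 := by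
  have h1 : p ∉ tsupport (pdx u) := fun hh => h (tsupport_pdx u hh)
  have h2 : p ∉ tsupport (pdy u) := fun hh => h (tsupport_pdy u hh)
  simp only [lap, pdx, pdy] at *
  rw [pd_eq_zero h1, pd_eq_zero h2, add_zero]

lemma tsupport_lap (u : ℝ × ℝ → ℝ) : tsupport (lap u) ⊆ tsupport u := by
  apply closure_minimal _ (isClosed_tsupport u)
  intro p hp
  simp only [Function.mem_support, ne_eq] at hp
  by_contra h
  exact hp (lap_eq_zero h)

/-- Clairaut / symmetry of second derivatives. -/
lemma pd_comm {u : ℝ × ℝ → ℝ} (hu : ContDiff ℝ (⊤ : ℕ∞) u) (v w p : ℝ × ℝ) :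
    fderiv ℝ (fun q => fderiv ℝ u q v) p w = fderiv ℝ (fun q => fderiv ℝ u q w) p v := by
  have hd : ∀ y, HasFDerivAt u (fderiv ℝ u y) y := fun y =>
    (hu.differentiable (by simp) y).hasFDerivAt
  have hd2 : HasFDerivAt (fderiv ℝ u) (fderiv ℝ (fderiv ℝ u) p) p :=
    (((hu.fderiv_right (m := (⊤ : ℕ∞)) (by simp)).differentiable (by simp)) p).hasFDerivAt
  have hsymm := second_derivative_symmetric hd hd2 v w
  have key : ∀ z y : ℝ × ℝ, fderiv ℝ (fun q => fderiv ℝ u q z) p y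
      = fderiv ℝ (fderiv ℝ u) p y z := by
    intro z y
    have hc : DifferentiableAt ℝ (fderiv ℝ u) p :=
      ((hu.fderiv_right (m := (⊤ : ℕ∞)) (by simp)).differentiable (by simp)) p
    have := fderiv_clm_apply hc (differentiableAt_const z)
    rw [show (fun q => fderiv ℝ u q z) = (fun q => (fderiv ℝ u q) ((fun _ => z) q)) from rfl,
      this]
    simp
  rw [key v w, key w v]
  exact hsymm.symm

end Helpers

section Slices

/-- spatial partial derivative of an uncurried function -/
def pspace (W : ℝ × (ℝ × ℝ) → ℝ) (v : ℝ × ℝ) : ℝ × (ℝ × ℝ) → ℝ :=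
  fun q => fderiv ℝ W q ((0 : ℝ), v)

/-- time partial derivative of an uncurried function -/
def ptime (W : ℝ × (ℝ × ℝ) → ℝ) : ℝ × (ℝ × ℝ) → ℝ :=
  fun q => fderiv ℝ W q ((1 : ℝ), (0 : ℝ × ℝ))

lemma contDiff_pspace {W : ℝ × (ℝ × ℝ) → ℝ} (hW : ContDiff ℝ (⊤ : ℕ∞) W) (v : ℝ × ℝ) :
    ContDiff ℝ (⊤ : ℕ∞) (pspace W v) :=
  (hW.fderiv_right (by simp)).clm_apply contDiff_const

lemma continuous_ptime {W : ℝ × (ℝ × ℝ) → ℝ} (hW : ContDiff ℝ (⊤ : ℕ∞) W) :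
    Continuous (ptime W) :=
  (((hW.fderiv_right (by simp)).clm_apply contDiff_const) : ContDiff ℝ (⊤ : ℕ∞) (ptime W)).continuous

lemma fderiv_slice {W : ℝ × (ℝ × ℝ) → ℝ} (hW : ContDiff ℝ (⊤ : ℕ∞) W) (t : ℝ) (p v : ℝ × ℝ) :
    fderiv ℝ (fun q => W (t, q)) p v = pspace W v (t, p) := by
  have h1 : HasFDerivAt (fun q : ℝ × ℝ => ((t, q) : ℝ × (ℝ × ℝ)))
      (ContinuousLinearMap.inr ℝ ℝ (ℝ × ℝ)) p := hasFDerivAt_prodMk_right t p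
  have h2 : HasFDerivAt W (fderiv ℝ W (t, p)) (t, p) :=
    (hW.differentiable (by simp) (t, p)).hasFDerivAt
  have h3 := (h2.comp p h1).fderiv
  have h4 : fderiv ℝ (fun q => W (t, q)) p
      = (fderiv ℝ W (t, p)).comp (ContinuousLinearMap.inr ℝ ℝ (ℝ × ℝ)) := h3
  rw [h4]; rfl

lemma pdx_slice {W : ℝ × (ℝ × ℝ) → ℝ} (hW : ContDiff ℝ (⊤ : ℕ∞) W) (t : ℝ) :
    pdx (fun p => W (t, p)) = fun p => pspace W (1, 0) (t, p) :=
  funext fun p => fderiv_slice hW t p (1, 0)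

lemma pdy_slice {W : ℝ × (ℝ × ℝ) → ℝ} (hW : ContDiff ℝ (⊤ : ℕ∞) W) (t : ℝ) :
    pdy (fun p => W (t, p)) = fun p => pspace W (0, 1) (t, p) :=
  funext fun p => fderiv_slice hW t p (0, 1)

lemma lap_slice {W : ℝ × (ℝ × ℝ) → ℝ} (hW : ContDiff ℝ (⊤ : ℕ∞) W) (t : ℝ) (p : ℝ × ℝ) :
    lap (fun p' => W (t, p')) p
      = pspace (pspace W (1, 0)) (1, 0) (t, p) + pspace (pspace W (0, 1)) (0, 1) (t, p) := by
  have hx : pdx (pdx (fun p' => W (t, p'))) p = pspace (pspace W (1, 0)) (1, 0) (t, p) := by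
    rw [pdx_slice hW t]
    exact fderiv_slice (contDiff_pspace hW (1, 0)) t p (1, 0)
  have hy : pdy (pdy (fun p' => W (t, p'))) p = pspace (pspace W (0, 1)) (0, 1) (t, p) := by
    rw [pdy_slice hW t]
    exact fderiv_slice (contDiff_pspace hW (0, 1)) t p (0, 1)
  simp only [lap, hx, hy]

lemma hasDerivAt_slice {W : ℝ × (ℝ × ℝ) → ℝ} (hW : ContDiff ℝ (⊤ : ℕ∞) W) (t : ℝ) (p : ℝ × ℝ) :
    HasDerivAt (fun s => W (s, p)) (ptime W (t, p)) t := by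
  have h1 : HasDerivAt (fun s : ℝ => ((s, p) : ℝ × (ℝ × ℝ))) ((1 : ℝ), (0 : ℝ × ℝ)) t :=
    (hasDerivAt_id t).prodMk (hasDerivAt_const t p)
  exact ((hW.differentiable (by simp) (t, p)).hasFDerivAt.comp_hasDerivAt t h1)

end Slices

section IBP

variable {K : Set (ℝ × ℝ)} (hK : IsCompact K)

lemma hcs_of_subset {b : ℝ × ℝ → ℝ} (hK : IsCompact K) (hs : tsupport b ⊆ K) :
    HasCompactSupport b :=
  IsCompact.of_isClosed_subset hK (isClosed_tsupport b) hs

lemma integ_mul_left {a b : ℝ × ℝ → ℝ} (hK : IsCompact K) (ha : Continuous a)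
    (hb : Continuous b) (hs : tsupport b ⊆ K) :
    Integrable (fun p => a p * b p) volume := by
  have : HasCompactSupport (fun p => a p * b p) :=
    HasCompactSupport.mul_left (hcs_of_subset hK hs)
  exact (ha.mul hb).integrable_of_hasCompactSupport this

lemma integ_mul_right {a b : ℝ × ℝ → ℝ} (hK : IsCompact K) (ha : Continuous a)
    (hb : Continuous b) (hs : tsupport a ⊆ K) :
    Integrable (fun p => a p * b p) volume := by
  have : HasCompactSupport (fun p => a p * b p) :=
    HasCompactSupport.mul_right (hcs_of_subset hK hs)
  exact (ha.mul hb).integrable_of_hasCompactSupport this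

/-- Integration by parts on `ℝ²` with `b` compactly supported. -/
lemma ibp_compact {a b : ℝ × ℝ → ℝ} (hK : IsCompact K) (ha : ContDiff ℝ (⊤ : ℕ∞) a)
    (hb : ContDiff ℝ (⊤ : ℕ∞) b) (hs : tsupport b ⊆ K) (v : ℝ × ℝ) :
    ∫ p, a p * fderiv ℝ b p v = - ∫ p, fderiv ℝ a p v * b p := by
  apply integral_mul_fderiv_eq_neg_fderiv_mul_of_integrable
  · exact integ_mul_left hK (contDiff_pd ha v).continuous hb.continuous hs
  · exact integ_mul_left hK ha.continuous (contDiff_pd hb v).continuous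
      ((support_pd_subset b v).trans hs)
  · exact integ_mul_left hK ha.continuous hb.continuous hs
  · exact fun x _ => ha.differentiable (by simp) x
  · exact fun x _ => hb.differentiable (by simp) x

/-- `∫ u Δu = -∫ |∇u|²` for smooth compactly supported `u`. -/
lemma integral_mul_lap {u : ℝ × ℝ → ℝ} (hK : IsCompact K) (hu : ContDiff ℝ (⊤ : ℕ∞) u)
    (hs : tsupport u ⊆ K) :
    ∫ p, u p * lap u p = - ∫ p, gradSq u p := by
  have hx : ∫ p, u p * pdx (pdx u) p = - ∫ p, pdx u p * pdx u p :=
    ibp_compact hK hu (contDiff_pdx hu) ((tsupport_pdx u).trans hs) (1, 0)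
  have hy : ∫ p, u p * pdy (pdy u) p = - ∫ p, pdy u p * pdy u p :=
    ibp_compact hK hu (contDiff_pdy hu) ((tsupport_pdy u).trans hs) (0, 1)
  have hsplit : ∫ p, u p * lap u p
      = (∫ p, u p * pdx (pdx u) p) + ∫ p, u p * pdy (pdy u) p := by
    rw [← integral_add]
    · exact integral_congr_ae (Filter.Eventually.of_forall fun p => by
        simp only [lap]; ring)
    · exact integ_mul_right hK hu.continuous (contDiff_pdx (contDiff_pdx hu)).continuous hs
    · exact integ_mul_right hK hu.continuous (contDiff_pdy (contDiff_pdy hu)).continuous hs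
  rw [hsplit, hx, hy, ← neg_add, ← integral_add]
  · congr 1
    exact integral_congr_ae (Filter.Eventually.of_forall fun p => by
      simp only [gradSq]; ring)
  · exact integ_mul_right hK (contDiff_pdx hu).continuous (contDiff_pdx hu).continuous
      ((tsupport_pdx u).trans hs)
  · exact integ_mul_right hK (contDiff_pdy hu).continuous (contDiff_pdy hu).continuous
      ((tsupport_pdy u).trans hs)

/-- `∫ u J(w,u) = 0` for smooth `w`, smooth compactly supported `u`. -/
lemma integral_mul_jac_self {w u : ℝ × ℝ → ℝ} (hK : IsCompact K) (hw : ContDiff ℝ (⊤ : ℕ∞) w)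
    (hu : ContDiff ℝ (⊤ : ℕ∞) u) (hs : tsupport u ⊆ K) :
    ∫ p, u p * jac w u p = 0 := by
  set q : ℝ × ℝ → ℝ := fun p => u p * u p with hq_def
  have hq : ContDiff ℝ (⊤ : ℕ∞) q := hu.mul hu
  have hqs : tsupport q ⊆ K := by
    refine (closure_minimal ?_ (isClosed_tsupport u)).trans hs
    intro p hp
    simp only [Function.mem_support, ne_eq, hq_def] at hp
    by_contra h
    exact hp (by rw [image_eq_zero_of_notMem_tsupport h, mul_zero])
  have hpdq : ∀ (v : ℝ × ℝ) (p : ℝ × ℝ),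
      fderiv ℝ q p v = 2 * (u p * fderiv ℝ u p v) := by
    intro v p
    have hd : DifferentiableAt ℝ u p := hu.differentiable (by simp) p
    rw [hq_def]
    rw [fderiv_fun_mul hd hd]
    simp only [ContinuousLinearMap.add_apply, ContinuousLinearMap.smul_apply, smul_eq_mul]
    ring
  -- ∫ pdy w * pdx q = - ∫ pdx (pdy w) * q
  have h1 : ∫ p, pdy w p * fderiv ℝ q p (1, 0) = - ∫ p, fderiv ℝ (pdy w) p (1, 0) * q p :=
    ibp_compact hK (contDiff_pdy hw) hq hqs (1, 0)
  have h2 : ∫ p, pdx w p * fderiv ℝ q p (0, 1) = - ∫ p, fderiv ℝ (pdx w) p (0, 1) * q p :=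
    ibp_compact hK (contDiff_pdx hw) hq hqs (0, 1)
  have hcomm : ∀ p, fderiv ℝ (pdy w) p (1, 0) = fderiv ℝ (pdx w) p (0, 1) := by
    intro p
    exact pd_comm hw (0, 1) (1, 0) p
  -- rewrite the integrand
  have hsplit : ∫ p, u p * jac w u p
      = (2:ℝ)⁻¹ * ((∫ p, pdy w p * fderiv ℝ q p (1, 0))
        - ∫ p, pdx w p * fderiv ℝ q p (0, 1)) := by
    rw [← integral_sub, ← integral_const_mul]
    · apply integral_congr_ae (Filter.Eventually.of_forall fun p => ?_)
      simp only [jac]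
      rw [hpdq (1, 0) p, hpdq (0, 1) p]
      show u p * (pdy w p * pdx u p - pdx w p * pdy u p) = _
      simp only [pdx, pdy]
      ring
    · exact integ_mul_left hK (contDiff_pdy hw).continuous (contDiff_pd hq (1, 0)).continuous
        ((support_pd_subset q (1, 0)).trans hqs)
    · exact integ_mul_left hK (contDiff_pdx hw).continuous (contDiff_pd hq (0, 1)).continuous
        ((support_pd_subset q (0, 1)).trans hqs)
  rw [hsplit, h1, h2]
  have : ∫ p, fderiv ℝ (pdy w) p (1, 0) * q p = ∫ p, fderiv ℝ (pdx w) p (0, 1) * q p :=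
    integral_congr_ae (Filter.Eventually.of_forall fun p => by dsimp only; rw [hcomm p])
  rw [this]
  ring

end IBP

section Energy

open Metric in
/-- Differentiation under the integral sign for the energy `∫_B W(s,p)² dp`. -/
lemma hasDerivAt_energy {W : ℝ × (ℝ × ℝ) → ℝ} (hW : ContDiff ℝ (⊤ : ℕ∞) W)
    {B : Set (ℝ × ℝ)} (hB : IsCompact B) (hBm : MeasurableSet B) (t : ℝ) :
    HasDerivAt (fun s => ∫ p in B, W (s, p) * W (s, p))
      (∫ p in B, 2 * W (t, p) * ptime W (t, p)) t := by
  haveI : IsFiniteMeasure (volume.restrict B) :=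
    ⟨by rw [Measure.restrict_apply_univ]; exact hB.measure_lt_top⟩
  set F' : ℝ → ℝ × ℝ → ℝ :=
    fun s p => ptime W (s, p) * W (s, p) + W (s, p) * ptime W (s, p) with hF'_def
  have hslice : ∀ s : ℝ, Continuous fun p : ℝ × ℝ => W (s, p) := fun s =>
    hW.continuous.comp (continuous_const.prodMk continuous_id)
  have hslice' : ∀ s : ℝ, Continuous fun p : ℝ × ℝ => ptime W (s, p) := fun s =>
    (continuous_ptime hW).comp (continuous_const.prodMk continuous_id)
  have hF'cont : Continuous fun q : ℝ × (ℝ × ℝ) => F' q.1 q.2 := by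
    have h2 : Continuous (ptime W) := continuous_ptime hW
    have : (fun q : ℝ × (ℝ × ℝ) => F' q.1 q.2)
        = fun q => ptime W q * W q + W q * ptime W q := by
      funext q; simp only [hF'_def]
    rw [this]
    exact (h2.mul hW.continuous).add (hW.continuous.mul h2)
  obtain ⟨M, hM⟩ := (IsCompact.exists_bound_of_continuousOn
    ((isCompact_Icc (a := t - 1) (b := t + 1)).prod hB) hF'cont.continuousOn)
  have key := hasDerivAt_integral_of_dominated_loc_of_deriv_le
    (F := fun s p => W (s, p) * W (s, p)) (F' := F') (x₀ := t)
    (μ := volume.restrict B) (bound := fun _ => M) (s := Metric.ball t 1) (Metric.ball_mem_nhds t one_pos)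
    (Filter.Eventually.of_forall fun s => ((hslice s).mul (hslice s)).aestronglyMeasurable)
    (((hslice t).mul (hslice t)).continuousOn.integrableOn_compact hB)
    (((hslice' t).mul (hslice t)).add ((hslice t).mul (hslice' t))).aestronglyMeasurable
    ?_ (integrable_const M) ?_
  · have heq : (fun p => F' t p) = fun p => 2 * W (t, p) * ptime W (t, p) := by
      funext p; simp only [hF'_def]; ring
    rw [← heq]
    exact key.2
  · refine (ae_restrict_mem hBm).mono fun p hp s hs => ?_
    apply hM (s, p)
    refine Set.mem_prod.2 ⟨?_, hp⟩
    rw [Real.ball_eq_Ioo] at hs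
    exact Set.mem_Icc_of_Ioo hs
  · exact Filter.Eventually.of_forall fun p s _ =>
      (hasDerivAt_slice hW s p).mul (hasDerivAt_slice hW s p)

end Energy

section GronwallBridge

lemma frequently_slope_of_hasDerivAt {f : ℝ → ℝ} {d : ℝ} {x : ℝ}
    (h : HasDerivAt f d x) :
    ∀ r, d < r → ∃ᶠ z in nhdsWithin x (Set.Ioi x), (z - x)⁻¹ * (f z - f x) < r := by
  intro r hr
  have h1 : Filter.Tendsto (slope f x) (nhdsWithin x (Set.Ioi x)) (nhds d) := by
    have h2 := h.hasDerivWithinAt (s := Set.Ioi x)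
    rw [hasDerivWithinAt_iff_tendsto_slope] at h2
    have : Set.Ioi x \ {x} = Set.Ioi x := by
      rw [Set.diff_singleton_eq_self]; simp
    rwa [this] at h2
  have h3 : ∀ᶠ z in nhdsWithin x (Set.Ioi x), slope f x z < r :=
    h1.eventually_lt_const hr
  refine h3.frequently.mono fun z hz => ?_
  rwa [slope_def_field, div_eq_inv_mul] at hz

end GronwallBridge

set_option maxHeartbeats 4000000 in
/-- Lemma 2.1: uniform bound of `‖ξ(t)‖ + ‖θ(t)‖` on finite time intervals. -/
theorem stmt12 (L Pr Ra : ℝ) (hL : 0 < L) (hPr : 0 < Pr) (hRa : 0 < Ra)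
    (f g : ℝ × ℝ → ℝ) (hf : Continuous f) (hf2 : MemLp f 2 volume)
    (hg : Continuous g) (hg2 : MemLp g 2 volume)
    (T : ℝ) (hT : 0 < T) (R : ℝ) (hR : 0 < R) :
    ∃ C > (0 : ℝ), ∀ sol : NBSolution L Pr Ra f g,
      L2norm (sol.xi 0) ≤ R → L2norm (sol.theta 0) ≤ R →
        ∀ t ∈ Set.Icc (0 : ℝ) T, L2norm (sol.xi t) + L2norm (sol.theta t) ≤ C := by
  have hf2' : Integrable (fun p : ℝ × ℝ => (f p) ^ 2) volume := hf2.integrable_sq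
  have hg2' : Integrable (fun p : ℝ × ℝ => (g p) ^ 2) volume := hg2.integrable_sq
  have hif : (0:ℝ) ≤ ∫ p : ℝ × ℝ, (f p) ^ 2 := integral_nonneg fun p => sq_nonneg _
  have hig : (0:ℝ) ≤ ∫ p : ℝ × ℝ, (g p) ^ 2 := integral_nonneg fun p => sq_nonneg _
  set a : ℝ := (Ra / Pr) ^ 2 + 1 with ha_def
  have ha : 0 < a := by positivity
  set bE : ℝ := (∫ p : ℝ × ℝ, (f p) ^ 2) + (Pr / 2) * ∫ p : ℝ × ℝ, (g p) ^ 2 with hbE_def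
  have hbE : 0 ≤ bE := by positivity
  set δ : ℝ := R ^ 2 + (Pr / 2) * R ^ 2 with hδ_def
  have hδ : 0 ≤ δ := by positivity
  set M : ℝ := δ * Real.exp (a * T) + (bE / a) * (Real.exp (a * T) - 1) with hM_def
  have hexp1 : (1:ℝ) ≤ Real.exp (a * T) := by
    rw [← Real.exp_zero]
    exact Real.exp_le_exp.2 (by positivity)
  have hM0 : 0 ≤ M := by
    have : (0:ℝ) ≤ Real.exp (a * T) - 1 := by linarith
    positivity
  have hgb : ∀ x ∈ Set.Icc (0:ℝ) T, gronwallBound δ a bE x ≤ M := by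
    intro x hx
    rw [gronwallBound_of_K_ne_0 ha.ne']
    beta_reduce
    have h1 : Real.exp (a * x) ≤ Real.exp (a * T) :=
      Real.exp_le_exp.2 (by nlinarith [hx.2, ha.le])
    have h2 : 0 ≤ bE / a := by positivity
    rw [hM_def]
    have h3 := mul_le_mul_of_nonneg_left h1 hδ
    have h4 := mul_le_mul_of_nonneg_left (sub_le_sub_right h1 (1:ℝ)) h2
    exact add_le_add h3 h4
  refine ⟨Real.sqrt M + Real.sqrt ((2 / Pr) * M) + 1, by positivity, ?_⟩
  intro sol hxi0 hth0 t ht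
  -- basic data
  obtain ⟨r, hKB⟩ := sol.K_compact.isBounded.subset_closedBall (0 : ℝ × ℝ)
  set B : Set (ℝ × ℝ) := Metric.closedBall 0 r with hB_def
  have hBc : IsCompact B := isCompact_closedBall _ _
  have hBm : MeasurableSet B := hBc.isClosed.measurableSet
  have hK := sol.K_compact
  have hV : ContDiff ℝ (⊤ : ℕ∞) (fun q : ℝ × (ℝ × ℝ) => sol.theta q.1 q.2) := sol.smooth_theta
  have hU : ContDiff ℝ (⊤ : ℕ∞) (fun q : ℝ × (ℝ × ℝ) => sol.Psi q.1 q.2) := sol.smooth_Psi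
  set X : ℝ × (ℝ × ℝ) → ℝ := fun q =>
    pspace (pspace (fun q : ℝ × (ℝ × ℝ) => sol.Psi q.1 q.2) (1, 0)) (1, 0) q
    + pspace (pspace (fun q : ℝ × (ℝ × ℝ) => sol.Psi q.1 q.2) (0, 1)) (0, 1) q with hX_def
  have hX : ContDiff ℝ (⊤ : ℕ∞) X :=
    (contDiff_pspace (contDiff_pspace hU _) _).add (contDiff_pspace (contDiff_pspace hU _) _)
  have hXeq : ∀ (s : ℝ) (p : ℝ × ℝ), sol.xi s p = X (s, p) := fun s p => lap_slice hU s p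
  have hθsm : ∀ s : ℝ, ContDiff ℝ (⊤ : ℕ∞) (sol.theta s) := fun s =>
    hV.comp (contDiff_const.prodMk contDiff_id)
  have hΨsm : ∀ s : ℝ, ContDiff ℝ (⊤ : ℕ∞) (sol.Psi s) := fun s =>
    hU.comp (contDiff_const.prodMk contDiff_id)
  have hξsm : ∀ s : ℝ, ContDiff ℝ (⊤ : ℕ∞) (sol.xi s) := fun s => contDiff_lap (hΨsm s)
  have hsupθ : ∀ s : ℝ, 0 ≤ s → tsupport (sol.theta s) ⊆ sol.K := sol.supp_theta
  have hsupξ : ∀ s : ℝ, 0 ≤ s → tsupport (sol.xi s) ⊆ sol.K := fun s hs =>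
    (tsupport_lap (sol.Psi s)).trans (sol.supp_Psi s hs)
  -- energies
  set Fθ : ℝ → ℝ := fun s => ∫ p in B, sol.theta s p * sol.theta s p with hFθ_def
  set Fξ : ℝ → ℝ := fun s => ∫ p in B, X (s, p) * X (s, p) with hFξ_def
  set G : ℝ → ℝ := fun s => Fξ s + (Pr / 2) * Fθ s with hG_def
  have hFθ0 : ∀ s, 0 ≤ Fθ s := fun s => integral_nonneg fun p => mul_self_nonneg _
  have hFξ0 : ∀ s, 0 ≤ Fξ s := fun s => integral_nonneg fun p => mul_self_nonneg _
  -- full-space identities (for s ≥ 0)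
  have hθfull : ∀ s : ℝ, 0 ≤ s → Fθ s = ∫ p, sol.theta s p * sol.theta s p := by
    intro s hs
    apply setIntegral_eq_integral_of_forall_compl_eq_zero
    intro p hp
    have h1 : p ∉ tsupport (sol.theta s) := fun h => hp (hKB (hsupθ s hs h))
    rw [image_eq_zero_of_notMem_tsupport h1, mul_zero]
  have hξfull : ∀ s : ℝ, 0 ≤ s → Fξ s = ∫ p, sol.xi s p * sol.xi s p := by
    intro s hs
    have h2 : (fun p => X (s, p) * X (s, p)) = fun p => sol.xi s p * sol.xi s p := by
      funext p; rw [hXeq s p]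
    rw [hFξ_def]
    show (∫ p in B, X (s, p) * X (s, p)) = _
    rw [h2]
    apply setIntegral_eq_integral_of_forall_compl_eq_zero
    intro p hp
    have h1 : p ∉ tsupport (sol.xi s) := fun h => hp (hKB (hsupξ s hs h))
    rw [image_eq_zero_of_notMem_tsupport h1, mul_zero]
  -- derivatives of the energies
  set GD : ℝ → ℝ := fun s =>
    (∫ p in B, 2 * X (s, p) * ptime X (s, p))
    + (Pr / 2) * ∫ p in B, 2 * sol.theta s p
        * ptime (fun q : ℝ × (ℝ × ℝ) => sol.theta q.1 q.2) (s, p) with hGD_def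
  have hdG : ∀ s : ℝ, HasDerivAt G (GD s) s := by
    intro s
    have h1 : HasDerivAt Fξ (∫ p in B, 2 * X (s, p) * ptime X (s, p)) s :=
      hasDerivAt_energy hX hBc hBm s
    have h2 : HasDerivAt Fθ (∫ p in B, 2 * sol.theta s p
        * ptime (fun q : ℝ × (ℝ × ℝ) => sol.theta q.1 q.2) (s, p)) s :=
      hasDerivAt_energy hV hBc hBm s
    exact h1.add (h2.const_mul (Pr / 2))
  -- pointwise identities from the PDE (s ≥ 0)
  have hiθ : ∀ s : ℝ, 0 ≤ s → ∀ p : ℝ × ℝ,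
      2 * sol.theta s p * ptime (fun q : ℝ × (ℝ × ℝ) => sol.theta q.1 q.2) (s, p)
        = 2 * sol.theta s p * ((1 / Pr) * lap (sol.theta s) p
            - jac (sol.Psi s) (sol.theta s) p + g p) := by
    intro s hs p
    by_cases hp : p ∈ channel L
    · have h1 := sol.eq_theta s hs p hp
      have h2 : HasDerivAt (fun τ => sol.theta τ p)
          (ptime (fun q : ℝ × (ℝ × ℝ) => sol.theta q.1 q.2) (s, p)) s :=
        hasDerivAt_slice hV s p
      rw [h2.deriv] at h1
      congr 1
      linarith
    · have hθ0 : sol.theta s p = 0 := image_eq_zero_of_notMem_tsupport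
        (fun h => hp (sol.K_subset (hsupθ s hs h)))
      rw [hθ0]; ring
  have hiξ : ∀ s : ℝ, 0 ≤ s → ∀ p : ℝ × ℝ,
      2 * X (s, p) * ptime X (s, p)
        = 2 * sol.xi s p * (lap (sol.xi s) p - jac (sol.Psi s) (sol.xi s) p
            - (Ra / Pr) * pdx (sol.theta s) p + f p) := by
    intro s hs p
    rw [← hXeq s p]
    by_cases hp : p ∈ channel L
    · have h1 := sol.eq_xi s hs p hp
      have hfun : (fun τ => lap (sol.Psi τ) p) = fun τ => X (τ, p) :=
        funext fun τ => lap_slice hU τ p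
      have h2 : HasDerivAt (fun τ => X (τ, p)) (ptime X (s, p)) s := hasDerivAt_slice hX s p
      rw [hfun, h2.deriv] at h1
      congr 1
      show ptime X (s, p) = lap (lap (sol.Psi s)) p - jac (sol.Psi s) (lap (sol.Psi s)) p
          - (Ra / Pr) * pdx (sol.theta s) p + f p
      linarith
    · have hξ0 : sol.xi s p = 0 := image_eq_zero_of_notMem_tsupport
        (fun h => hp (sol.K_subset (hsupξ s hs h)))
      rw [hξ0]; ring
  -- the derivative bound on [0, T)
  have hGDle : ∀ s ∈ Set.Ico (0 : ℝ) T, GD s ≤ a * G s + bE := by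
    intro s hsT
    have hs : (0:ℝ) ≤ s := hsT.1
    -- continuity facts
    have hcθ : Continuous (sol.theta s) := (hθsm s).continuous
    have hcξ : Continuous (sol.xi s) := (hξsm s).continuous
    have hclapθ : Continuous (lap (sol.theta s)) := (contDiff_lap (hθsm s)).continuous
    have hclapξ : Continuous (lap (sol.xi s)) := (contDiff_lap (hξsm s)).continuous
    have hcjacθ : Continuous (jac (sol.Psi s) (sol.theta s)) := by
      unfold jac
      exact ((contDiff_pdy (hΨsm s)).continuous.mul (contDiff_pdx (hθsm s)).continuous).sub
        ((contDiff_pdx (hΨsm s)).continuous.mul (contDiff_pdy (hθsm s)).continuous)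
    have hcjacξ : Continuous (jac (sol.Psi s) (sol.xi s)) := by
      unfold jac
      exact ((contDiff_pdy (hΨsm s)).continuous.mul (contDiff_pdx (hξsm s)).continuous).sub
        ((contDiff_pdx (hΨsm s)).continuous.mul (contDiff_pdy (hξsm s)).continuous)
    -- integrability facts
    have i_tlt : Integrable (fun p => sol.theta s p * lap (sol.theta s) p) volume :=
      integ_mul_right hK hcθ hclapθ (hsupθ s hs)
    have i_tj : Integrable (fun p => sol.theta s p * jac (sol.Psi s) (sol.theta s) p) volume :=
      integ_mul_right hK hcθ hcjacθ (hsupθ s hs)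
    have i_tg : Integrable (fun p => sol.theta s p * g p) volume :=
      integ_mul_right hK hcθ hg (hsupθ s hs)
    have i_tt : Integrable (fun p => sol.theta s p * sol.theta s p) volume :=
      integ_mul_right hK hcθ hcθ (hsupθ s hs)
    have i_xlx : Integrable (fun p => sol.xi s p * lap (sol.xi s) p) volume :=
      integ_mul_right hK hcξ hclapξ (hsupξ s hs)
    have i_xj : Integrable (fun p => sol.xi s p * jac (sol.Psi s) (sol.xi s) p) volume :=
      integ_mul_right hK hcξ hcjacξ (hsupξ s hs)
    have i_xf : Integrable (fun p => sol.xi s p * f p) volume :=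
      integ_mul_right hK hcξ hf (hsupξ s hs)
    have i_xx : Integrable (fun p => sol.xi s p * sol.xi s p) volume :=
      integ_mul_right hK hcξ hcξ (hsupξ s hs)
    have i_xdt : Integrable (fun p => sol.xi s p * pdx (sol.theta s) p) volume :=
      integ_mul_right hK hcξ (contDiff_pdx (hθsm s)).continuous (hsupξ s hs)
    have i_gradθ : Integrable (fun p => gradSq (sol.theta s) p) volume := by
      have e : (fun p => gradSq (sol.theta s) p)
          = fun p => pdx (sol.theta s) p * pdx (sol.theta s) p
            + pdy (sol.theta s) p * pdy (sol.theta s) p := by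
        funext p; simp only [gradSq]; ring
      rw [e]
      exact (integ_mul_right hK (contDiff_pdx (hθsm s)).continuous
          (contDiff_pdx (hθsm s)).continuous ((tsupport_pdx _).trans (hsupθ s hs))).add
        (integ_mul_right hK (contDiff_pdy (hθsm s)).continuous
          (contDiff_pdy (hθsm s)).continuous ((tsupport_pdy _).trans (hsupθ s hs)))
    have i_gradξ : Integrable (fun p => gradSq (sol.xi s) p) volume := by
      have e : (fun p => gradSq (sol.xi s) p)
          = fun p => pdx (sol.xi s) p * pdx (sol.xi s) p
            + pdy (sol.xi s) p * pdy (sol.xi s) p := by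
        funext p; simp only [gradSq]; ring
      rw [e]
      exact (integ_mul_right hK (contDiff_pdx (hξsm s)).continuous
          (contDiff_pdx (hξsm s)).continuous ((tsupport_pdx _).trans (hsupξ s hs))).add
        (integ_mul_right hK (contDiff_pdy (hξsm s)).continuous
          (contDiff_pdy (hξsm s)).continuous ((tsupport_pdy _).trans (hsupξ s hs)))
    have hAθ0 : (0:ℝ) ≤ ∫ p, gradSq (sol.theta s) p :=
      integral_nonneg fun p => add_nonneg (sq_nonneg _) (sq_nonneg _)
    have hAξ0 : (0:ℝ) ≤ ∫ p, gradSq (sol.xi s) p :=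
      integral_nonneg fun p => add_nonneg (sq_nonneg _) (sq_nonneg _)
    -- θ part
    have hBθ : (∫ p in B, 2 * sol.theta s p
          * ptime (fun q : ℝ × (ℝ × ℝ) => sol.theta q.1 q.2) (s, p))
        = ∫ p, 2 * sol.theta s p * ((1 / Pr) * lap (sol.theta s) p
            - jac (sol.Psi s) (sol.theta s) p + g p) := by
      rw [show (fun p => 2 * sol.theta s p
            * ptime (fun q : ℝ × (ℝ × ℝ) => sol.theta q.1 q.2) (s, p))
          = fun p => 2 * sol.theta s p * ((1 / Pr) * lap (sol.theta s) p
            - jac (sol.Psi s) (sol.theta s) p + g p) from funext (hiθ s hs)]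
      apply setIntegral_eq_integral_of_forall_compl_eq_zero
      intro p hp
      rw [image_eq_zero_of_notMem_tsupport (fun h => hp (hKB (hsupθ s hs h)))]
      ring
    have hBξ : (∫ p in B, 2 * X (s, p) * ptime X (s, p))
        = ∫ p, 2 * sol.xi s p * (lap (sol.xi s) p - jac (sol.Psi s) (sol.xi s) p
            - (Ra / Pr) * pdx (sol.theta s) p + f p) := by
      rw [show (fun p => 2 * X (s, p) * ptime X (s, p))
          = fun p => 2 * sol.xi s p * (lap (sol.xi s) p - jac (sol.Psi s) (sol.xi s) p
            - (Ra / Pr) * pdx (sol.theta s) p + f p) from funext (hiξ s hs)]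
      apply setIntegral_eq_integral_of_forall_compl_eq_zero
      intro p hp
      rw [image_eq_zero_of_notMem_tsupport (fun h => hp (hKB (hsupξ s hs h)))]
      ring
    -- splitting the θ integral
    have hIθeq : (∫ p, 2 * sol.theta s p * ((1 / Pr) * lap (sol.theta s) p
            - jac (sol.Psi s) (sol.theta s) p + g p))
        = (2 / Pr) * (-∫ p, gradSq (sol.theta s) p)
          + 2 * ∫ p, sol.theta s p * g p := by
      have e1 : (fun p => 2 * sol.theta s p * ((1 / Pr) * lap (sol.theta s) p
            - jac (sol.Psi s) (sol.theta s) p + g p))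
          = fun p => (2 / Pr) * (sol.theta s p * lap (sol.theta s) p)
            + ((-2 : ℝ) * (sol.theta s p * jac (sol.Psi s) (sol.theta s) p)
              + 2 * (sol.theta s p * g p)) := by
        funext p; ring
      have iB : Integrable (fun p => (-2 : ℝ) * (sol.theta s p * jac (sol.Psi s) (sol.theta s) p)
          + 2 * (sol.theta s p * g p)) volume := (i_tj.const_mul (-2)).add (i_tg.const_mul 2)
      rw [e1, integral_add (i_tlt.const_mul (2 / Pr)) iB,
        integral_add (i_tj.const_mul (-2)) (i_tg.const_mul 2),
        integral_const_mul, integral_const_mul, integral_const_mul,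
        integral_mul_lap hK (hθsm s) (hsupθ s hs),
        integral_mul_jac_self hK (hΨsm s) (hθsm s) (hsupθ s hs)]
      ring
    have h2g : 2 * (∫ p, sol.theta s p * g p) ≤ Fθ s + ∫ p, (g p) ^ 2 := by
      have iG : Integrable (fun p => sol.theta s p * sol.theta s p + (g p) ^ 2) volume :=
        i_tt.add hg2'
      rw [hθfull s hs, ← integral_const_mul, ← integral_add i_tt hg2']
      refine integral_mono (i_tg.const_mul 2) (i_tt.add hg2') fun p => ?_
      simp only
      nlinarith [sq_nonneg (sol.theta s p - g p)]
    -- splitting the ξ integral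
    have hIξeq : (∫ p, 2 * sol.xi s p * (lap (sol.xi s) p - jac (sol.Psi s) (sol.xi s) p
            - (Ra / Pr) * pdx (sol.theta s) p + f p))
        = 2 * (-∫ p, gradSq (sol.xi s) p)
          + ∫ p, (-(2 * (Ra / Pr))) * (sol.xi s p * pdx (sol.theta s) p)
              + 2 * (sol.xi s p * f p) := by
      have e1 : (fun p => 2 * sol.xi s p * (lap (sol.xi s) p - jac (sol.Psi s) (sol.xi s) p
            - (Ra / Pr) * pdx (sol.theta s) p + f p))
          = fun p => 2 * (sol.xi s p * lap (sol.xi s) p)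
            + ((-2 : ℝ) * (sol.xi s p * jac (sol.Psi s) (sol.xi s) p)
              + ((-(2 * (Ra / Pr))) * (sol.xi s p * pdx (sol.theta s) p)
                + 2 * (sol.xi s p * f p))) := by
        funext p; ring
      have iC : Integrable (fun p => (-(2 * (Ra / Pr))) * (sol.xi s p * pdx (sol.theta s) p)
          + 2 * (sol.xi s p * f p)) volume := (i_xdt.const_mul _).add (i_xf.const_mul 2)
      have iD : Integrable (fun p => (-2 : ℝ) * (sol.xi s p * jac (sol.Psi s) (sol.xi s) p)
          + ((-(2 * (Ra / Pr))) * (sol.xi s p * pdx (sol.theta s) p)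
            + 2 * (sol.xi s p * f p))) volume := (i_xj.const_mul (-2)).add iC
      rw [e1, integral_add (i_xlx.const_mul 2) iD,
        integral_add (i_xj.const_mul (-2)) iC,
        integral_const_mul, integral_const_mul,
        integral_mul_lap hK (hξsm s) (hsupξ s hs),
        integral_mul_jac_self hK (hΨsm s) (hξsm s) (hsupξ s hs)]
      ring
    have h2f : (∫ p, (-(2 * (Ra / Pr))) * (sol.xi s p * pdx (sol.theta s) p)
          + 2 * (sol.xi s p * f p))
        ≤ (Ra / Pr) ^ 2 * Fξ s + (∫ p, gradSq (sol.theta s) p) + Fξ s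
          + ∫ p, (f p) ^ 2 := by
      have hr : (Ra / Pr) ^ 2 * Fξ s + (∫ p, gradSq (sol.theta s) p) + Fξ s + ∫ p, (f p) ^ 2
          = ∫ p, ((Ra / Pr) ^ 2 * (sol.xi s p * sol.xi s p) + gradSq (sol.theta s) p)
            + (sol.xi s p * sol.xi s p + (f p) ^ 2) := by
        have iE : Integrable (fun p => (Ra / Pr) ^ 2 * (sol.xi s p * sol.xi s p)
            + gradSq (sol.theta s) p) volume := (i_xx.const_mul _).add i_gradθ
        have iF : Integrable (fun p => sol.xi s p * sol.xi s p + (f p) ^ 2) volume :=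
          i_xx.add hf2'
        rw [integral_add iE iF, integral_add (i_xx.const_mul ((Ra / Pr) ^ 2)) i_gradθ,
          integral_add i_xx hf2', integral_const_mul, hξfull s hs]
        ring
      rw [hr]
      refine integral_mono ((i_xdt.const_mul _).add (i_xf.const_mul 2))
        (((i_xx.const_mul _).add i_gradθ).add (i_xx.add hf2')) fun p => ?_
      simp only [gradSq]
      nlinarith [sq_nonneg ((Ra / Pr) * sol.xi s p + pdx (sol.theta s) p),
        sq_nonneg (sol.xi s p - f p), sq_nonneg (pdy (sol.theta s) p)]
    -- combine
    have hc1 : (Pr / 2) * ((2 / Pr) * (∫ p, gradSq (sol.theta s) p))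
        = ∫ p, gradSq (sol.theta s) p := by
      field_simp
    have hexp : a * G s + bE
        = (Ra / Pr) ^ 2 * Fξ s + Fξ s + (Ra / Pr) ^ 2 * ((Pr / 2) * Fθ s)
          + (Pr / 2) * Fθ s + (∫ p : ℝ × ℝ, (f p) ^ 2)
          + (Pr / 2) * ∫ p : ℝ × ℝ, (g p) ^ 2 := by
      rw [ha_def, hG_def, hbE_def]; ring
    have hpos1 : (0:ℝ) ≤ (Ra / Pr) ^ 2 * ((Pr / 2) * Fθ s) :=
      mul_nonneg (sq_nonneg _) (mul_nonneg (by positivity) (hFθ0 s))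
    have hmul := mul_le_mul_of_nonneg_left h2g (le_of_lt (by positivity : (0:ℝ) < Pr / 2))
    rw [hGD_def]
    show (∫ p in B, 2 * X (s, p) * ptime X (s, p))
        + (Pr / 2) * (∫ p in B, 2 * sol.theta s p
          * ptime (fun q : ℝ × (ℝ × ℝ) => sol.theta q.1 q.2) (s, p)) ≤ a * G s + bE
    rw [hBθ, hBξ, hIθeq, hIξeq, hexp]
    nlinarith [hAξ0, hAθ0, hpos1, hmul, hc1, h2f]
  -- Gronwall
  clear_value X Fθ Fξ G GD a bE δ M
  have hcont : ContinuousOn G (Set.Icc 0 T) :=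
    (continuous_iff_continuousAt.2 fun s => (hdG s).continuousAt).continuousOn
  have hG0 : G 0 ≤ δ := by
    have hsq : ∀ u : ℝ × ℝ → ℝ, L2norm u ≤ R → (∫ p, u p * u p) ≤ R ^ 2 := by
      intro u hu
      have e : (∫ p, u p * u p) = ∫ p, (u p) ^ 2 :=
        integral_congr_ae (Filter.Eventually.of_forall fun p => (pow_two _).symm)
      have hI : (0:ℝ) ≤ ∫ p, (u p) ^ 2 := integral_nonneg fun p => sq_nonneg _
      rw [e, ← Real.sq_sqrt hI]
      exact pow_le_pow_left₀ (Real.sqrt_nonneg _) hu 2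
    have h1 : Fξ 0 ≤ R ^ 2 := by
      rw [hξfull 0 le_rfl]; exact hsq _ hxi0
    have h2 : Fθ 0 ≤ R ^ 2 := by
      rw [hθfull 0 le_rfl]; exact hsq _ hth0
    have h3 := mul_le_mul_of_nonneg_left h2 (le_of_lt (by positivity : (0:ℝ) < Pr / 2))
    rw [hG_def, hδ_def]
    dsimp only
    linarith
  have hGron := le_gronwallBound_of_liminf_deriv_right_le (f := G) (f' := GD)
    (δ := δ) (K := a) (ε := bE) (a := 0) (b := T) hcont
    (fun x _ r hr => frequently_slope_of_hasDerivAt (hdG x) r hr) hG0 hGDle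
  have hGt : G t ≤ M := by
    have := hGron t ht
    rw [sub_zero] at this
    exact this.trans (hgb t ht)
  have hFξt : Fξ t ≤ M := by
    have h3 := mul_nonneg (le_of_lt (by positivity : (0:ℝ) < Pr / 2)) (hFθ0 t)
    have h4 : Fξ t + (Pr / 2) * Fθ t ≤ M := by rw [hG_def] at hGt; exact hGt
    linarith
  have hFθt : Fθ t ≤ (2 / Pr) * M := by
    have h4 : Fξ t + (Pr / 2) * Fθ t ≤ M := by rw [hG_def] at hGt; exact hGt
    have h5 : (Pr / 2) * Fθ t ≤ M := by linarith [hFξ0 t]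
    have h6 := mul_le_mul_of_nonneg_left h5 (le_of_lt (by positivity : (0:ℝ) < 2 / Pr))
    have h7 : (2 / Pr) * ((Pr / 2) * Fθ t) = Fθ t := by field_simp
    linarith
  -- conclude
  have ht0 : (0:ℝ) ≤ t := ht.1
  have e1 : (∫ p, (sol.xi t p) ^ 2) = Fξ t := by
    rw [hξfull t ht0]
    exact integral_congr_ae (Filter.Eventually.of_forall fun p => pow_two _)
  have e2 : (∫ p, (sol.theta t p) ^ 2) = Fθ t := by
    rw [hθfull t ht0]
    exact integral_congr_ae (Filter.Eventually.of_forall fun p => pow_two _)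
  have l1 : L2norm (sol.xi t) ≤ Real.sqrt M := by
    unfold L2norm
    exact Real.sqrt_le_sqrt (by rw [e1]; exact hFξt)
  have l2 : L2norm (sol.theta t) ≤ Real.sqrt ((2 / Pr) * M) := by
    unfold L2norm
    exact Real.sqrt_le_sqrt (by rw [e2]; exact hFθt)
  linarith
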